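/- arXiv:0708.2029 — 5 statements merged into one kernel-verified Lean document; each statement's English description precedes it below -/
import Mathlib

section
/- Let E be a finite-dimensional real inner product space and let u, v : E → ℝ be twice continuously differentiable. Then at every point x ∈ E the Laplacians of the products v·e^{2u} and v·e^{-2u} satisfy the identity Δ(v e^{2u})(x) · Δ(v e^{-2u})(x) = (Δv(x) + 4‖∇u(x)‖² v(x))² − (4⟨∇u(x), ∇v(x)⟩ + 2 v(x) Δu(x))². -/
/-!
The Leibniz rule and the chain rule for `exp` give
`Δ(v e^w) = e^w (Δv + 2⟨∇v, ∇w⟩ + (Δw + ‖∇w‖²) v)`. For `w = ±2u` this is `e^{±2u} (A ± B)` with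
`A = Δv + 4‖∇u‖² v` and `B = 4⟨∇u, ∇v⟩ + 2 v Δu`, so the exponentials cancel in the product,
which is `A² − B²`.
-/

open scoped BigOperators

/-- The Laplacian of `f : E → ℝ` at `x`: the sum of the second directional
derivatives along an orthonormal basis of `E`. -/
noncomputable def laplacian {E : Type*} [NormedAddCommGroup E] [InnerProductSpace ℝ E]
    [FiniteDimensional ℝ E] (f : E → ℝ) (x : E) : ℝ :=
  ∑ i, iteratedFDeriv ℝ 2 f x ![stdOrthonormalBasis ℝ E i, stdOrthonormalBasis ℝ E i]

open Filter Topology InnerProductSpace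
open scoped Laplacian Gradient RealInnerProductSpace

section SecondDerivative

variable {E : Type*} [NormedAddCommGroup E] [NormedSpace ℝ E] {f g w : E → ℝ} {x : E}

theorem iteratedFDeriv_two_apply_of_fderiv_eventuallyEq {D : E → E →L[ℝ] ℝ}
    {D' : E →L[ℝ] E →L[ℝ] ℝ} (hD : fderiv ℝ f =ᶠ[𝓝 x] D) (hD' : HasFDerivAt D D' x)
    (e₁ e₂ : E) : iteratedFDeriv ℝ 2 f x ![e₁, e₂] = D' e₁ e₂ := by
  rw [iteratedFDeriv_two_apply, hD.fderiv_eq, hD'.fderiv]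
  rfl

theorem ContDiffAt.hasFDerivAt_fderiv (hf : ContDiffAt ℝ 2 f x) :
    HasFDerivAt (fderiv ℝ f) (fderiv ℝ (fderiv ℝ f) x) x :=
  ((hf.fderiv_right (m := 1) le_rfl).differentiableAt one_ne_zero).hasFDerivAt

theorem ContDiffAt.eventually_differentiableAt (hf : ContDiffAt ℝ 2 f x) :
    ∀ᶠ y in 𝓝 x, DifferentiableAt ℝ f y :=
  (hf.eventually (by simp)).mono fun _ hy => hy.differentiableAt two_ne_zero

theorem ContDiffAt.iteratedFDeriv_two_mul_apply (hf : ContDiffAt ℝ 2 f x)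
    (hg : ContDiffAt ℝ 2 g x) (e₁ e₂ : E) :
    iteratedFDeriv ℝ 2 (fun y => f y * g y) x ![e₁, e₂] =
      iteratedFDeriv ℝ 2 f x ![e₁, e₂] * g x + fderiv ℝ f x e₁ * fderiv ℝ g x e₂
        + fderiv ℝ f x e₂ * fderiv ℝ g x e₁ + f x * iteratedFDeriv ℝ 2 g x ![e₁, e₂] := by
  have hD : fderiv ℝ (fun y => f y * g y) =ᶠ[𝓝 x]
      fun y => f y • fderiv ℝ g y + g y • fderiv ℝ f y := by
    filter_upwards [hf.eventually_differentiableAt, hg.eventually_differentiableAt]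
      with y hfy hgy using fderiv_fun_mul hfy hgy
  have hD' := ((hf.differentiableAt two_ne_zero).hasFDerivAt.smul hg.hasFDerivAt_fderiv).add
    ((hg.differentiableAt two_ne_zero).hasFDerivAt.smul hf.hasFDerivAt_fderiv)
  rw [iteratedFDeriv_two_apply_of_fderiv_eventuallyEq hD hD', iteratedFDeriv_two_apply f,
    iteratedFDeriv_two_apply g]
  simp only [add_apply, smul_apply, ContinuousLinearMap.smulRight_apply, smul_eq_mul,
    Matrix.cons_val_zero, Matrix.cons_val_one]
  ring

theorem ContDiffAt.iteratedFDeriv_two_exp_apply (hw : ContDiffAt ℝ 2 w x) (e₁ e₂ : E) :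
    iteratedFDeriv ℝ 2 (fun y => Real.exp (w y)) x ![e₁, e₂] =
      Real.exp (w x) * (iteratedFDeriv ℝ 2 w x ![e₁, e₂] + fderiv ℝ w x e₁ * fderiv ℝ w x e₂) := by
  have hD : fderiv ℝ (fun y => Real.exp (w y)) =ᶠ[𝓝 x] fun y => Real.exp (w y) • fderiv ℝ w y := by
    filter_upwards [hw.eventually_differentiableAt] with y hy using fderiv_exp hy
  have hD' := (hw.differentiableAt two_ne_zero).hasFDerivAt.exp.smul hw.hasFDerivAt_fderiv
  rw [iteratedFDeriv_two_apply_of_fderiv_eventuallyEq hD hD', iteratedFDeriv_two_apply w]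
  simp only [add_apply, smul_apply, ContinuousLinearMap.smulRight_apply, smul_eq_mul,
    Matrix.cons_val_zero, Matrix.cons_val_one]
  ring

end SecondDerivative

section Laplacian

variable {E : Type*} [NormedAddCommGroup E] [InnerProductSpace ℝ E] [FiniteDimensional ℝ E]
  {f g u w : E → ℝ} {x : E}

theorem laplacian_eq_laplacian (f : E → ℝ) (x : E) : laplacian f x = Δ f x := by
  rw [laplacian_eq_iteratedFDeriv_stdOrthonormalBasis]
  rfl

theorem OrthonormalBasis.sum_fderiv_mul_fderiv {ι : Type*} [Fintype ι]
    (b : OrthonormalBasis ι ℝ E) (f g : E → ℝ) (x : E) :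
    ∑ i, fderiv ℝ f x (b i) * fderiv ℝ g x (b i) = ⟪∇ f x, ∇ g x⟫_ℝ := by
  simp_rw [← inner_gradient_left, real_inner_comm _ (∇ g x)]
  exact b.sum_inner_mul_inner _ _

theorem ContDiffAt.laplacian_mul (hf : ContDiffAt ℝ 2 f x) (hg : ContDiffAt ℝ 2 g x) :
    Δ (fun y => f y * g y) x = Δ f x * g x + 2 * ⟪∇ f x, ∇ g x⟫_ℝ + f x * Δ g x := by
  simp only [laplacian_eq_iteratedFDeriv_stdOrthonormalBasis, hf.iteratedFDeriv_two_mul_apply hg,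
    Finset.sum_add_distrib, ← Finset.sum_mul, ← Finset.mul_sum,
    OrthonormalBasis.sum_fderiv_mul_fderiv]
  ring

theorem ContDiffAt.laplacian_exp (hw : ContDiffAt ℝ 2 w x) :
    Δ (fun y => Real.exp (w y)) x = Real.exp (w x) * (Δ w x + ‖∇ w x‖ ^ 2) := by
  simp only [laplacian_eq_iteratedFDeriv_stdOrthonormalBasis, hw.iteratedFDeriv_two_exp_apply,
    ← Finset.mul_sum, Finset.sum_add_distrib, OrthonormalBasis.sum_fderiv_mul_fderiv,
    real_inner_self_eq_norm_sq]

theorem DifferentiableAt.gradient_exp (hw : DifferentiableAt ℝ w x) :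
    ∇ (fun y => Real.exp (w y)) x = Real.exp (w x) • ∇ w x := by
  simp [gradient, fderiv_exp hw]

theorem DifferentiableAt.gradient_const_mul (hw : DifferentiableAt ℝ w x) (c : ℝ) :
    ∇ (fun y => c * w y) x = c • ∇ w x := by
  simp [gradient, fderiv_const_mul hw]

theorem ContDiffAt.laplacian_mul_exp (hf : ContDiffAt ℝ 2 f x) (hw : ContDiffAt ℝ 2 w x) :
    Δ (fun y => f y * Real.exp (w y)) x =
      Real.exp (w x) * (Δ f x + 2 * ⟪∇ f x, ∇ w x⟫_ℝ + (Δ w x + ‖∇ w x‖ ^ 2) * f x) := by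
  rw [hf.laplacian_mul hw.exp, hw.laplacian_exp,
    (hw.differentiableAt two_ne_zero).gradient_exp, inner_smul_right]
  ring

theorem ContDiffAt.laplacian_mul_exp_const_mul (hf : ContDiffAt ℝ 2 f x)
    (hu : ContDiffAt ℝ 2 u x) (c : ℝ) :
    Δ (fun y => f y * Real.exp (c * u y)) x =
      Real.exp (c * u x) * (Δ f x + 2 * c * ⟪∇ f x, ∇ u x⟫_ℝ
        + (c * Δ u x + c ^ 2 * ‖∇ u x‖ ^ 2) * f x) := by
  have hΔ : Δ (fun y => c * u y) x = c * Δ u x := laplacian_smul c hu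
  rw [hf.laplacian_mul_exp (contDiffAt_const.mul hu), hΔ,
    (hu.differentiableAt two_ne_zero).gradient_const_mul, inner_smul_right, norm_smul,
    Real.norm_eq_abs, mul_pow, sq_abs]
  ring

end Laplacian

/-- Pointwise identity for the product of the Laplacians of `v e^{2u}` and `v e^{-2u}`:
`Δ(v e^{2u}) Δ(v e^{-2u}) = (Δv + 4‖∇u‖² v)² − (4⟨∇u, ∇v⟩ + 2 v Δu)²`. -/
theorem stmt_1 {E : Type*} [NormedAddCommGroup E] [InnerProductSpace ℝ E]
    [FiniteDimensional ℝ E] (u v : E → ℝ)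
    (hu : ContDiff ℝ 2 u) (hv : ContDiff ℝ 2 v) (x : E) :
    laplacian (fun y => v y * Real.exp (2 * u y)) x
        * laplacian (fun y => v y * Real.exp (-2 * u y)) x
      = (laplacian v x + 4 * ‖gradient u x‖ ^ 2 * v x) ^ 2
        - (4 * (inner ℝ (gradient u x) (gradient v x) : ℝ) + 2 * v x * laplacian u x) ^ 2 := by
  have hcancel : Real.exp (2 * u x) * Real.exp (-2 * u x) = 1 := by
    rw [← Real.exp_add, show 2 * u x + -2 * u x = 0 by ring, Real.exp_zero]
  simp only [laplacian_eq_laplacian]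
  rw [hv.contDiffAt.laplacian_mul_exp_const_mul hu.contDiffAt,
    hv.contDiffAt.laplacian_mul_exp_const_mul hu.contDiffAt, mul_mul_mul_comm, hcancel,
    real_inner_comm]
  ring
end

section
/- Let E be a finite-dimensional real inner product space and let u, v : E → ℝ be twice continuously differentiable. Then at every point x ∈ E one has the lower bound Δ(v e^{2u})(x) · Δ(v e^{-2u})(x) ≥ (1/2)(Δv(x))² − 32·( ‖∇u(x)‖⁴ v(x)² + ⟨∇u(x), ∇v(x)⟩² + (Δu(x))² v(x)² ). -/
/-!
For every `c`, the product and chain rules give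
`Δ(v e^{cu}) = e^{cu} (Δv + 2c ⟨∇u, ∇v⟩ + c v Δu + c² v ‖∇u‖²)`: differentiate twice along
each vector of an orthonormal basis and sum, using `∑ᵢ Df(bᵢ) Dg(bᵢ) = ⟨∇f, ∇g⟩`.
For `c = ±2` the exponentials cancel in the product, which becomes `(P + Q)(P - Q)` with
`P = Δv + 4v‖∇u‖²` and `Q = 4⟨∇u, ∇v⟩ + 2vΔu`; then `P² ≥ (Δv)²/2 - 16v²‖∇u‖⁴` and
`Q² ≤ 32⟨∇u, ∇v⟩² + 8v²(Δu)²`.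
-/

open scoped BigOperators

section SecondDirectionalDerivative

variable {𝕜 : Type*} [NontriviallyNormedField 𝕜] {E : Type*} [NormedAddCommGroup E]
  [NormedSpace 𝕜 E]

theorem iteratedFDeriv_two_apply_self {F : Type*} [NormedAddCommGroup F] [NormedSpace 𝕜 F]
    {f : E → F} {x : E} (hf : DifferentiableAt 𝕜 (fderiv 𝕜 f) x) (e : E) :
    iteratedFDeriv 𝕜 2 f x ![e, e] = fderiv 𝕜 (fun y ↦ fderiv 𝕜 f y e) x e := by
  rw [iteratedFDeriv_two_apply, fderiv_clm_apply hf (differentiableAt_const e)]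
  simp

theorem ContDiff.differentiable_fderiv {F : Type*} [NormedAddCommGroup F] [NormedSpace 𝕜 F]
    {f : E → F} (hf : ContDiff 𝕜 2 f) : Differentiable 𝕜 (fderiv 𝕜 f) :=
  (hf.fderiv_right le_rfl).differentiable one_ne_zero

theorem ContDiff.differentiable_fderiv_apply {F : Type*} [NormedAddCommGroup F] [NormedSpace 𝕜 F]
    {f : E → F} (hf : ContDiff 𝕜 2 f) (e : E) :
    Differentiable 𝕜 (fun y ↦ fderiv 𝕜 f y e) :=
  fun y ↦ (hf.differentiable_fderiv y).clm_apply (differentiableAt_const e)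

theorem iteratedFDeriv_two_mul_apply_self {𝔸 : Type*} [NormedCommRing 𝔸] [NormedAlgebra 𝕜 𝔸]
    {f g : E → 𝔸} (hf : ContDiff 𝕜 2 f) (hg : ContDiff 𝕜 2 g) (x e : E) :
    iteratedFDeriv 𝕜 2 (fun y ↦ f y * g y) x ![e, e] =
      iteratedFDeriv 𝕜 2 f x ![e, e] * g x + 2 * (fderiv 𝕜 f x e * fderiv 𝕜 g x e)
        + f x * iteratedFDeriv 𝕜 2 g x ![e, e] := by
  have hf1 := hf.differentiable two_ne_zero
  have hg1 := hg.differentiable two_ne_zero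
  have hD : (fun y ↦ fderiv 𝕜 (fun y ↦ f y * g y) y e) =
      fun y ↦ fderiv 𝕜 f y e * g y + f y * fderiv 𝕜 g y e := by
    ext y
    rw [fderiv_fun_mul (hf1 y) (hg1 y)]
    simp only [add_apply, smul_apply, smul_eq_mul]
    ring
  have hD' := (((hf.differentiable_fderiv_apply e x).hasFDerivAt.fun_mul (hg1 x).hasFDerivAt).fun_add
    ((hf1 x).hasFDerivAt.fun_mul (hg.differentiable_fderiv_apply e x).hasFDerivAt))
  rw [iteratedFDeriv_two_apply_self (hf.mul hg).differentiable_fderiv.differentiableAt, hD,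
    hD'.fderiv, iteratedFDeriv_two_apply_self hf.differentiable_fderiv.differentiableAt,
    iteratedFDeriv_two_apply_self hg.differentiable_fderiv.differentiableAt]
  simp only [add_apply, smul_apply, smul_eq_mul]
  ring

end SecondDirectionalDerivative

section SecondDirectionalDerivativeReal

variable {E : Type*} [NormedAddCommGroup E] [NormedSpace ℝ E]

theorem iteratedFDeriv_two_exp_comp_apply_self {w : E → ℝ} (hw : ContDiff ℝ 2 w) (x e : E) :
    iteratedFDeriv ℝ 2 (fun y ↦ Real.exp (w y)) x ![e, e] =
      Real.exp (w x) * (iteratedFDeriv ℝ 2 w x ![e, e] + fderiv ℝ w x e ^ 2) := by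
  have hw1 := hw.differentiable two_ne_zero
  have hD : (fun y ↦ fderiv ℝ (fun y ↦ Real.exp (w y)) y e) =
      fun y ↦ Real.exp (w y) * fderiv ℝ w y e := by
    ext y
    rw [fderiv_exp (hw1 y)]
    rfl
  have hD' := (hw1 x).hasFDerivAt.exp.fun_mul (hw.differentiable_fderiv_apply e x).hasFDerivAt
  rw [iteratedFDeriv_two_apply_self hw.exp.differentiable_fderiv.differentiableAt, hD,
    hD'.fderiv, iteratedFDeriv_two_apply_self hw.differentiable_fderiv.differentiableAt]
  simp only [add_apply, smul_apply, smul_eq_mul]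
  ring

theorem iteratedFDeriv_two_mul_exp_const_mul_apply_self (c : ℝ) {u v : E → ℝ}
    (hu : ContDiff ℝ 2 u) (hv : ContDiff ℝ 2 v) (x e : E) :
    iteratedFDeriv ℝ 2 (fun y ↦ v y * Real.exp (c * u y)) x ![e, e] =
      Real.exp (c * u x) * (iteratedFDeriv ℝ 2 v x ![e, e]
        + 2 * c * (fderiv ℝ v x e * fderiv ℝ u x e)
        + c * v x * iteratedFDeriv ℝ 2 u x ![e, e] + c ^ 2 * v x * fderiv ℝ u x e ^ 2) := by
  have hcu : ContDiff ℝ 2 (fun y ↦ c * u y) := contDiff_const.mul hu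
  have hDcu : fderiv ℝ (fun y ↦ c * u y) x e = c * fderiv ℝ u x e := by
    rw [fderiv_const_mul ((hu.differentiable two_ne_zero) x)]
    rfl
  have hD2cu : iteratedFDeriv ℝ 2 (fun y ↦ c * u y) x ![e, e] =
      c * iteratedFDeriv ℝ 2 u x ![e, e] :=
    congrArg (· ![e, e]) (iteratedFDeriv_const_smul_apply (a := c) hu.contDiffAt)
  have hDexp : fderiv ℝ (fun y ↦ Real.exp (c * u y)) x e =
      Real.exp (c * u x) * (c * fderiv ℝ u x e) := by
    rw [fderiv_exp ((hcu.differentiable two_ne_zero) x)]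
    exact congrArg (Real.exp (c * u x) * ·) hDcu
  rw [iteratedFDeriv_two_mul_apply_self hv hcu.exp, iteratedFDeriv_two_exp_comp_apply_self hcu,
    hDexp, hD2cu, hDcu]
  ring

end SecondDirectionalDerivativeReal

section Laplacian

variable {E : Type*} [NormedAddCommGroup E] [InnerProductSpace ℝ E] [FiniteDimensional ℝ E]

theorem OrthonormalBasis.sum_fderiv_apply_mul_fderiv_apply {ι : Type*} [Fintype ι]
    (b : OrthonormalBasis ι ℝ E) (f g : E → ℝ) (x : E) :
    ∑ i, fderiv ℝ f x (b i) * fderiv ℝ g x (b i) = inner ℝ (gradient f x) (gradient g x) := by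
  rw [← b.sum_inner_mul_inner]
  congr with i
  rw [inner_gradient_left, real_inner_comm, inner_gradient_left]

theorem laplacian_mul_exp_const_mul (c : ℝ) {u v : E → ℝ} (hu : ContDiff ℝ 2 u)
    (hv : ContDiff ℝ 2 v) (x : E) :
    laplacian (fun y ↦ v y * Real.exp (c * u y)) x =
      Real.exp (c * u x) * (laplacian v x + 2 * c * inner ℝ (gradient u x) (gradient v x)
        + c * v x * laplacian u x + c ^ 2 * v x * ‖gradient u x‖ ^ 2) := by
  have hvu := (stdOrthonormalBasis ℝ E).sum_fderiv_apply_mul_fderiv_apply v u x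
  have huu := (stdOrthonormalBasis ℝ E).sum_fderiv_apply_mul_fderiv_apply u u x
  simp only [← sq, real_inner_self_eq_norm_sq] at huu
  simp only [laplacian, iteratedFDeriv_two_mul_exp_const_mul_apply_self c hu hv,
    ← Finset.mul_sum, Finset.sum_add_distrib, hvu, huu, real_inner_comm (gradient v x)]

end Laplacian

theorem half_sq_sub_le_mul (a s b v g : ℝ) :
    a ^ 2 / 2 - 32 * (g ^ 4 * v ^ 2 + s ^ 2 + b ^ 2 * v ^ 2) ≤
      (a + 4 * s + 2 * v * b + 4 * v * g ^ 2) * (a - 4 * s - 2 * v * b + 4 * v * g ^ 2) := by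
  nlinarith [sq_nonneg (a + 8 * v * g ^ 2), sq_nonneg (4 * s - 2 * v * b), sq_nonneg (v * g ^ 2),
    sq_nonneg (v * b)]

/-- Pointwise lower bound:
`Δ(v e^{2u}) Δ(v e^{-2u}) ≥ (1/2)(Δv)² − 32(‖∇u‖⁴ v² + ⟨∇u, ∇v⟩² + (Δu)² v²)`. -/
theorem stmt_2 {E : Type*} [NormedAddCommGroup E] [InnerProductSpace ℝ E]
    [FiniteDimensional ℝ E] (u v : E → ℝ)
    (hu : ContDiff ℝ 2 u) (hv : ContDiff ℝ 2 v) (x : E) :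
    laplacian (fun y => v y * Real.exp (2 * u y)) x
        * laplacian (fun y => v y * Real.exp (-2 * u y)) x
      ≥ (1 / 2) * (laplacian v x) ^ 2
        - 32 * (‖gradient u x‖ ^ 4 * (v x) ^ 2
            + (inner ℝ (gradient u x) (gradient v x) : ℝ) ^ 2
            + (laplacian u x) ^ 2 * (v x) ^ 2) := by
  have hexp : Real.exp (2 * u x) * Real.exp (-2 * u x) = 1 := by
    rw [← Real.exp_add, ← add_mul, add_neg_cancel, zero_mul, Real.exp_zero]
  rw [laplacian_mul_exp_const_mul 2 hu hv x, laplacian_mul_exp_const_mul (-2) hu hv x,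
    mul_mul_mul_comm, hexp, one_mul, ge_iff_le]
  convert half_sq_sub_le_mul (laplacian v x) (inner ℝ (gradient u x) (gradient v x))
    (laplacian u x) (v x) ‖gradient u x‖ using 1 <;> ring
end

section
/- Let C > 0, ε > 0, δ > 0 satisfy C(1 + 3ε)δ < 2ε, let t₀ ∈ ℝ, and let x : ℝ → ℝ be differentiable on [t₀, ∞) with x(t) ≥ 0 for all t ≥ t₀, x(t₀) ≤ ε, x integrable on [t₀, ∞) with ∫_{t₀}^∞ x(t) dt ≤ δ, and x'(t) ≤ C (x(t)² + x(t)) for all t ≥ t₀. Then x(t) ≤ 3ε for all t ≥ t₀. -/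
/-!
Below the threshold `3ε` the differential inequality is linear, `x' ≤ C(x² + x) ≤ C(1 + 3ε) x`,
so up to the first time `t₁` at which `x` reaches `3ε` it integrates to
`x(t₁) ≤ x(t₀) + C(1 + 3ε) ∫ x ≤ ε + C(1 + 3ε) δ < 3ε`, a contradiction.
-/

open MeasureTheory Set

theorem ContinuousOn.exists_first_le_apply {α β : Type*} [ConditionallyCompleteLinearOrder α]
    [TopologicalSpace α] [OrderTopology α] [LinearOrder β] [TopologicalSpace β]
    [OrderClosedTopology β] {f : α → β} {a T : α} {c : β} (hf : ContinuousOn f (Ici a))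
    (ha : f a < c) (hT : a ≤ T) (hc : c ≤ f T) :
    ∃ t, a < t ∧ c ≤ f t ∧ ∀ s ∈ Ico a t, f s < c := by
  set S := Ici a ∩ f ⁻¹' Ici c
  have hS : IsClosed S := hf.preimage_isClosed_of_isClosed isClosed_Ici isClosed_Ici
  have hbdd : BddBelow S := ⟨a, fun s hs => hs.1⟩
  obtain ⟨haS, hcS⟩ : sInf S ∈ S := hS.csInf_mem ⟨T, hT, hc⟩ hbdd
  refine ⟨sInf S, haS.lt_of_ne fun h => ha.not_ge (h ▸ hcS), hcS, fun s hs => ?_⟩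
  by_contra! hcs
  exact hs.2.not_ge (csInf_le hbdd ⟨hs.1, hcs⟩)

theorem intervalIntegral_le_setIntegral_Ici {f : ℝ → ℝ} {a b : ℝ} (hab : a ≤ b)
    (hf : IntegrableOn f (Ici a)) (hf_nonneg : ∀ t ≥ a, 0 ≤ f t) :
    ∫ t in a..b, f t ≤ ∫ t in Ici a, f t := by
  rw [intervalIntegral.integral_of_le hab]
  refine setIntegral_mono_set hf ?_ (.of_forall fun t ht => le_of_lt ht.1)
  filter_upwards [ae_restrict_mem measurableSet_Ici] with t ht using hf_nonneg t ht

theorem stmt_4_general (C ε δ : ℝ) (hC : 0 < C) (hε : 0 < ε)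
    (hsmall : C * (1 + 3 * ε) * δ < 2 * ε) (t₀ : ℝ) (x x' : ℝ → ℝ)
    (hderiv : ∀ t ≥ t₀, HasDerivWithinAt x (x' t) (Set.Ici t₀) t)
    (hxnn : ∀ t ≥ t₀, 0 ≤ x t)
    (hx0 : x t₀ ≤ ε)
    (hint : IntegrableOn x (Set.Ici t₀))
    (hintle : ∫ t in Set.Ici t₀, x t ≤ δ)
    (hdi : ∀ t ≥ t₀, x' t ≤ C * ((x t) ^ 2 + x t)) :
    ∀ t ≥ t₀, x t ≤ 3 * ε := by
  intro T hT
  by_contra! hxT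
  have hcont : ContinuousOn x (Ici t₀) := fun t ht => (hderiv t ht).continuousWithinAt
  obtain ⟨t₁, ht₀₁, hx₁, hbelow⟩ :=
    hcont.exists_first_le_apply (hx0.trans_lt (by linarith)) hT hxT.le
  have hlinear : ∀ t ∈ Ioo t₀ t₁, x' t ≤ C * (1 + 3 * ε) * x t := fun t ht => by
    have hxt := hxnn t ht.1.le
    have := hbelow t ⟨ht.1.le, ht.2⟩
    nlinarith [hdi t ht.1.le, mul_nonneg hC.le (mul_nonneg hxt (sub_nonneg.2 this.le))]
  have hgrowth : x t₁ - x t₀ ≤ ∫ t in t₀..t₁, C * (1 + 3 * ε) * x t :=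
    intervalIntegral.sub_le_integral_of_hasDeriv_right_of_le ht₀₁.le
      (hcont.mono Icc_subset_Ici_self)
      (fun t ht => ((hderiv t ht.1.le).hasDerivAt (Ici_mem_nhds ht.1)).hasDerivWithinAt)
      ((hint.mono_set Icc_subset_Ici_self).const_mul _) hlinear
  have hmass := intervalIntegral_le_setIntegral_Ici ht₀₁.le hint hxnn
  rw [intervalIntegral.integral_const_mul] at hgrowth
  nlinarith [mul_le_mul_of_nonneg_left (hmass.trans hintle) (by positivity : 0 ≤ C * (1 + 3 * ε))]

/-- Quantitative non-concentration: if `x ≥ 0` on `[t₀, ∞)`, `x(t₀) ≤ ε`,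
`∫_{t₀}^∞ x ≤ δ`, `x' ≤ C(x² + x)` on `[t₀, ∞)` and `C(1 + 3ε)δ < 2ε`,
then `x ≤ 3ε` on `[t₀, ∞)`. -/
theorem stmt_4 (C ε δ : ℝ) (hC : 0 < C) (hε : 0 < ε) (hδ : 0 < δ)
    (hsmall : C * (1 + 3 * ε) * δ < 2 * ε) (t₀ : ℝ) (x x' : ℝ → ℝ)
    (hderiv : ∀ t ≥ t₀, HasDerivWithinAt x (x' t) (Set.Ici t₀) t)
    (hxnn : ∀ t ≥ t₀, 0 ≤ x t)
    (hx0 : x t₀ ≤ ε)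
    (hint : IntegrableOn x (Set.Ici t₀))
    (hintle : ∫ t in Set.Ici t₀, x t ≤ δ)
    (hdi : ∀ t ≥ t₀, x' t ≤ C * ((x t) ^ 2 + x t)) :
    ∀ t ≥ t₀, x t ≤ 3 * ε :=
  stmt_4_general C ε δ hC hε hsmall t₀ x x' hderiv hxnn hx0 hint hintle hdi
end

section
/- Let C > 0 and let x : ℝ → ℝ be differentiable on [0, ∞) with x(t) ≥ 0 for all t ≥ 0, x integrable on [0, ∞), and x'(t) ≤ C (x(t)² + x(t)) for all t ≥ 0. Then x(t) → 0 as t → ∞. -/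
/-!
The substitution `y = x / (1 + x)` linearizes the differential inequality: `y' = x' / (1 + x)²`
is at most `C y`, so by Grönwall `y` can grow at most by the factor `exp C` over a time interval
of length one. Hence `∫_{t-1}^t y ≥ exp (-C) y t`, while these window integrals tend to zero
because `y ≤ x` is integrable. Thus `y → 0`, and so does `x = y / (1 - y)`.
-/

open MeasureTheory Filter Set Real Topology

theorem le_mul_exp_of_hasDerivWithinAt_le_mul {f f' : ℝ → ℝ} {a K : ℝ}
    (hf : ∀ t ≥ a, HasDerivWithinAt f (f' t) (Ici a) t)
    (hbound : ∀ t ≥ a, f' t ≤ K * f t) {s t : ℝ} (has : a ≤ s) (hst : s ≤ t) :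
    f t ≤ f s * exp (K * (t - s)) := by
  have hIcc : Icc s t ⊆ Ici a := fun u hu => has.trans hu.1
  have hf' : ∀ u ∈ Ico s t, HasDerivWithinAt f (f' u) (Ici u) u := fun u hu =>
    (hf u (has.trans hu.1)).mono (Ici_subset_Ici.2 (has.trans hu.1))
  have h := le_gronwallBound_of_liminf_deriv_right_le (f' := f') (δ := f s) (ε := 0)
    (fun u hu => (hf u (hIcc hu)).continuousWithinAt.mono hIcc)
    (fun u hu _ hr => (hf' u hu).liminf_right_slope_le hr) le_rfl
    (fun u hu => by simpa using hbound u (has.trans hu.1)) t ⟨hst, le_rfl⟩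
  rwa [gronwallBound_ε0] at h

theorem exp_neg_mul_le_of_hasDerivWithinAt_le_mul {f f' : ℝ → ℝ} {a K : ℝ} (hK : 0 ≤ K)
    (hf : ∀ t ≥ a, HasDerivWithinAt f (f' t) (Ici a) t)
    (hbound : ∀ t ≥ a, f' t ≤ K * f t) (hf0 : ∀ t ≥ a, 0 ≤ f t) :
    ∀ s ≥ a, ∀ t ∈ Icc s (s + 1), exp (-K) * f t ≤ f s := by
  intro s hs t ht
  have hexp : exp (K * (t - s)) ≤ exp K := exp_le_exp.2 (by nlinarith [ht.1, ht.2])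
  calc exp (-K) * f t ≤ exp (-K) * (f s * exp K) :=
        mul_le_mul_of_nonneg_left
          ((le_mul_exp_of_hasDerivWithinAt_le_mul hf hbound hs ht.1).trans
            (mul_le_mul_of_nonneg_left hexp (hf0 s hs))) (exp_pos _).le
    _ = f s := by rw [mul_left_comm, ← exp_add, neg_add_cancel, exp_zero, mul_one]

theorem tendsto_intervalIntegral_sub_self_atTop {f : ℝ → ℝ} {a : ℝ}
    (hf : IntegrableOn f (Ioi a)) (h : ℝ) :
    Tendsto (fun t => ∫ s in (t - h)..t, f s) atTop (𝓝 0) := by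
  have hF : Tendsto (fun b => ∫ s in a..b, f s) atTop (𝓝 (∫ s in Ioi a, f s)) :=
    intervalIntegral_tendsto_integral_Ioi a hf tendsto_id
  have hdiff := hF.sub (hF.comp (tendsto_atTop_add_const_right atTop (-h) tendsto_id))
  rw [sub_self] at hdiff
  refine hdiff.congr' ?_
  filter_upwards [eventually_ge_atTop (a + h), eventually_ge_atTop a] with t hth hta
  have hii : ∀ b, a ≤ b → IntervalIntegrable f volume a b := fun b hb =>
    (intervalIntegrable_iff_integrableOn_Ioc_of_le hb).2 (hf.mono_set Ioc_subset_Ioi_self)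
  exact intervalIntegral.integral_interval_sub_left (hii t hta) (hii (t - h) (by linarith))

theorem tendsto_zero_of_integrableOn_of_mul_le {y : ℝ → ℝ} {a c : ℝ} (hc : 0 < c)
    (hy : ∀ t ≥ a, 0 ≤ y t) (hint : IntegrableOn y (Ioi a))
    (hwin : ∀ s ≥ a, ∀ t ∈ Icc s (s + 1), c * y t ≤ y s) :
    Tendsto y atTop (𝓝 0) := by
  have hlow : ∀ t ≥ a + 1, c * y t ≤ ∫ s in (t - 1)..t, y s := by
    intro t ht
    have hii : IntervalIntegrable y volume (t - 1) t :=
      (intervalIntegrable_iff_integrableOn_Ioc_of_le (by linarith)).2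
        (hint.mono_set fun u hu => show a < u by linarith [hu.1])
    calc c * y t = ∫ _ in (t - 1)..t, c * y t := by simp
      _ ≤ ∫ s in (t - 1)..t, y s :=
        intervalIntegral.integral_mono_on (by linarith) intervalIntegrable_const hii
          fun s hs => hwin s (by linarith [hs.1]) t ⟨hs.2, by linarith [hs.1]⟩
  have hupper : Tendsto (fun t => c⁻¹ * ∫ s in (t - 1)..t, y s) atTop (𝓝 0) := by
    simpa using (tendsto_intervalIntegral_sub_self_atTop hint 1).const_mul c⁻¹
  refine tendsto_of_tendsto_of_tendsto_of_le_of_le' tendsto_const_nhds hupper ?_ ?_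
  · filter_upwards [eventually_ge_atTop a] with t ht using hy t ht
  · filter_upwards [eventually_ge_atTop (a + 1)] with t ht
    rw [le_inv_mul_iff₀ hc]
    exact hlow t ht

theorem HasDerivWithinAt.div_one_add {x : ℝ → ℝ} {x' t : ℝ} {s : Set ℝ}
    (hx : HasDerivWithinAt x x' s t) (ht : 1 + x t ≠ 0) :
    HasDerivWithinAt (fun u => x u / (1 + x u)) (x' / (1 + x t) ^ 2) s t :=
  (hx.div (hx.const_add 1) ht).congr_deriv (by ring)

theorem div_one_add_sq_le_mul_div_one_add {C u u' : ℝ} (hu : 0 ≤ u)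
    (h : u' ≤ C * (u ^ 2 + u)) : u' / (1 + u) ^ 2 ≤ C * (u / (1 + u)) := by
  have hpos : 0 < 1 + u := by linarith
  rw [div_le_iff₀ (by positivity)]
  calc u' ≤ C * (u ^ 2 + u) := h
    _ = C * (u / (1 + u)) * (1 + u) ^ 2 := by field_simp; ring

theorem Integrable.div_one_add {α : Type*} [MeasurableSpace α] {μ : Measure α} {x : α → ℝ}
    (hint : Integrable x μ) (hx : ∀ᵐ a ∂μ, 0 ≤ x a) :
    Integrable (fun a => x a / (1 + x a)) μ := by
  have hxm := hint.aemeasurable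
  refine hint.mono' (hxm.div (aemeasurable_const.add hxm)).aestronglyMeasurable ?_
  filter_upwards [hx] with a ha
  rw [norm_of_nonneg (div_nonneg ha (by linarith))]
  exact div_le_self ha (by linarith)

theorem tendsto_zero_of_tendsto_div_one_add {α : Type*} {l : Filter α} {x : α → ℝ}
    (hx : ∀ᶠ t in l, 1 + x t ≠ 0) (h : Tendsto (fun t => x t / (1 + x t)) l (𝓝 0)) :
    Tendsto x l (𝓝 0) := by
  have hcont : ContinuousAt (fun u : ℝ => u / (1 - u)) 0 :=
    continuousAt_id.div (continuousAt_const.sub continuousAt_id) (by norm_num)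
  have hlim := hcont.tendsto.comp h
  rw [sub_zero, div_one] at hlim
  refine hlim.congr' ?_
  filter_upwards [hx] with t ht
  simp only [Function.comp_apply]
  field_simp
  ring

/-- If `x ≥ 0` on `[0, ∞)` is integrable and satisfies `x' ≤ C(x² + x)` there,
then `x(t) → 0` as `t → ∞`. -/
theorem stmt_5 (C : ℝ) (hC : 0 < C) (x x' : ℝ → ℝ)
    (hderiv : ∀ t ≥ (0 : ℝ), HasDerivWithinAt x (x' t) (Set.Ici 0) t)
    (hxnn : ∀ t ≥ (0 : ℝ), 0 ≤ x t)
    (hint : IntegrableOn x (Set.Ici 0))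
    (hdi : ∀ t ≥ (0 : ℝ), x' t ≤ C * ((x t) ^ 2 + x t)) :
    Tendsto x atTop (nhds 0) := by
  have hpos : ∀ t ≥ (0 : ℝ), 0 < 1 + x t := fun t ht => by linarith [hxnn t ht]
  set y : ℝ → ℝ := fun t => x t / (1 + x t)
  have hynn : ∀ t ≥ (0 : ℝ), 0 ≤ y t := fun t ht => div_nonneg (hxnn t ht) (hpos t ht).le
  have hwin : ∀ s ≥ (0 : ℝ), ∀ t ∈ Icc s (s + 1), exp (-C) * y t ≤ y s :=
    exp_neg_mul_le_of_hasDerivWithinAt_le_mul hC.le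
      (fun t ht => (hderiv t ht).div_one_add (hpos t ht).ne')
      (fun t ht => div_one_add_sq_le_mul_div_one_add (hxnn t ht) (hdi t ht)) hynn
  have hyint : IntegrableOn y (Ioi 0) :=
    Integrable.div_one_add (hint.mono_set Ioi_subset_Ici_self)
      (ae_restrict_of_forall_mem measurableSet_Ioi fun t ht => hxnn t (le_of_lt ht))
  refine tendsto_zero_of_tendsto_div_one_add ?_
    (tendsto_zero_of_integrableOn_of_mul_le (exp_pos (-C)) hynn hyint hwin)
  filter_upwards [eventually_ge_atTop 0] with t ht using (hpos t ht).ne'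
end

section
/- Let H be a real Hilbert space and let P : H → H be a continuous linear operator that is self-adjoint and nonnegative (⟨P w, w⟩ ≥ 0 for all w ∈ H). Let v : ℝ → H be continuously differentiable with v(0) = 0, and let f : ℝ → H be continuous, and suppose v'(t) = −P(v(t)) + f(t) for all t ∈ [0, 1]. Then ∫₀¹ ‖v'(t)‖² dt + ∫₀¹ ‖P(v(t))‖² dt ≤ ∫₀¹ ‖f(t)‖² dt. -/
/-!
Write `f = v' + P v` and expand `‖f‖² = ‖v'‖² + ‖P v‖² + 2⟪P v, v'⟫`. Because `P` is symmetric, the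
cross term is the time derivative of the energy `⟪P v, v⟫`; since `v(0) = 0` it integrates to
`⟪P v(1), v(1)⟫ ≥ 0`.
-/

open MeasureTheory

namespace LinearMap.IsSymmetric

variable {H : Type*} [NormedAddCommGroup H] [InnerProductSpace ℝ H] {P : H →L[ℝ] H}

theorem hasDerivAt_inner_apply_self (hP : (P : H →ₗ[ℝ] H).IsSymmetric) {v : ℝ → H} {v' : H}
    {t : ℝ} (hv : HasDerivAt v v' t) :
    HasDerivAt (fun s => (inner ℝ (P (v s)) (v s) : ℝ)) (2 * inner ℝ (P (v t)) v') t := by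
  have hPv : HasDerivAt (fun s => P (v s)) (P v') t := P.hasFDerivAt.comp_hasDerivAt t hv
  refine (hPv.inner ℝ hv).congr_deriv ?_
  have hsymm : (inner ℝ (P v') (v t) : ℝ) = inner ℝ v' (P (v t)) := hP v' (v t)
  rw [hsymm, real_inner_comm (P (v t)) v']
  ring

theorem integral_norm_add_apply_sq (hP : (P : H →ₗ[ℝ] H).IsSymmetric) {v v' : ℝ → H}
    (hv : ∀ t, HasDerivAt v (v' t) t) (hv' : Continuous v') (a b : ℝ) :
    ∫ t in a..b, ‖v' t + P (v t)‖ ^ 2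
      = (∫ t in a..b, ‖v' t‖ ^ 2) + (∫ t in a..b, ‖P (v t)‖ ^ 2)
        + (inner ℝ (P (v b)) (v b) - inner ℝ (P (v a)) (v a)) := by
  have hPv : Continuous fun t => P (v t) :=
    P.continuous.comp (Differentiable.continuous fun t => (hv t).differentiableAt)
  have hcross : Continuous fun t => 2 * (inner ℝ (P (v t)) (v' t) : ℝ) :=
    continuous_const.mul (hPv.inner hv')
  have hexpand : ∀ t, ‖v' t + P (v t)‖ ^ 2
      = ‖v' t‖ ^ 2 + ‖P (v t)‖ ^ 2 + 2 * inner ℝ (P (v t)) (v' t) := fun t => by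
    rw [norm_add_sq_real, real_inner_comm]
    ring
  have hsq_v' : IntervalIntegrable (fun t => ‖v' t‖ ^ 2) volume a b :=
    (hv'.norm.pow 2).intervalIntegrable a b
  have hsq_Pv : IntervalIntegrable (fun t => ‖P (v t)‖ ^ 2) volume a b :=
    (hPv.norm.pow 2).intervalIntegrable a b
  simp only [hexpand]
  rw [intervalIntegral.integral_add (hsq_v'.add hsq_Pv) (hcross.intervalIntegrable a b),
    intervalIntegral.integral_add hsq_v' hsq_Pv,
    intervalIntegral.integral_eq_sub_of_hasDerivAt
      (fun t _ => hP.hasDerivAt_inner_apply_self (hv t)) (hcross.intervalIntegrable a b)]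

end LinearMap.IsSymmetric

theorem stmt_7_general {H : Type*} [NormedAddCommGroup H] [InnerProductSpace ℝ H]
    (P : H →L[ℝ] H)
    (hself : ∀ w w' : H, (inner ℝ (P w) w' : ℝ) = (inner ℝ w (P w') : ℝ))
    (hnonneg : ∀ w : H, 0 ≤ (inner ℝ (P w) w : ℝ))
    (v v' f : ℝ → H)
    (hv : ∀ t : ℝ, HasDerivAt v (v' t) t)
    (hv' : Continuous v')
    (hv0 : v 0 = 0)
    (heq : ∀ t ∈ Set.Icc (0 : ℝ) 1, v' t = -P (v t) + f t) :
    (∫ t in (0 : ℝ)..1, ‖v' t‖ ^ 2) + ∫ t in (0 : ℝ)..1, ‖P (v t)‖ ^ 2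
      ≤ ∫ t in (0 : ℝ)..1, ‖f t‖ ^ 2 := by
  have hf : ∀ t ∈ Set.uIcc (0 : ℝ) 1, ‖f t‖ ^ 2 = ‖v' t + P (v t)‖ ^ 2 := fun t ht => by
    rw [heq t (Set.uIcc_of_le (zero_le_one' ℝ) ▸ ht), neg_add_cancel_comm]
  rw [intervalIntegral.integral_congr hf,
    LinearMap.IsSymmetric.integral_norm_add_apply_sq hself hv hv', hv0, map_zero, inner_zero_right]
  linarith [hnonneg (v 1)]

/-- Abstract parabolic energy estimate: if `P` is a nonnegative self-adjoint bounded
operator on a real Hilbert space, `v` is `C¹` with `v(0) = 0` and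
`v' = −P v + f` on `[0, 1]`, then
`∫₀¹ ‖v'‖² + ∫₀¹ ‖P v‖² ≤ ∫₀¹ ‖f‖²`. -/
theorem stmt_7 {H : Type*} [NormedAddCommGroup H] [InnerProductSpace ℝ H]
    [CompleteSpace H] (P : H →L[ℝ] H)
    (hself : ∀ w w' : H, (inner ℝ (P w) w' : ℝ) = (inner ℝ w (P w') : ℝ))
    (hnonneg : ∀ w : H, 0 ≤ (inner ℝ (P w) w : ℝ))
    (v v' f : ℝ → H)
    (hv : ∀ t : ℝ, HasDerivAt v (v' t) t)
    (hv' : Continuous v')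
    (hf : Continuous f)
    (hv0 : v 0 = 0)
    (heq : ∀ t ∈ Set.Icc (0 : ℝ) 1, v' t = -P (v t) + f t) :
    (∫ t in (0 : ℝ)..1, ‖v' t‖ ^ 2) + ∫ t in (0 : ℝ)..1, ‖P (v t)‖ ^ 2
      ≤ ∫ t in (0 : ℝ)..1, ‖f t‖ ^ 2 :=
  stmt_7_general P hself hnonneg v v' f hv hv' hv0 heq
end
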